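/- arXiv:0909.1241 — 4 statements merged into one kernel-verified Lean document; each statement's English description precedes it below -/
import Mathlib

section
/- Define β_N = 1 and β_j = 1 - exp(-β_{j+1}) for 0 ≤ j ≤ N-1. Then exp(-β_0) ≥ 1/e for every N ≥ 0, with equality if and only if N = 0. -/
theorem stmt7 (N : ℕ) (β : ℕ → ℝ) (hend : β N = 1)
    (hrec : ∀ j, j < N → β j = 1 - Real.exp (-β (j + 1))) :
    Real.exp (-β 0) ≥ 1 / Real.exp 1 ∧ (Real.exp (-β 0) = 1 / Real.exp 1 ↔ N = 0) := by
  have hkey : 1 / Real.exp 1 = Real.exp (-1) := by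
    rw [Real.exp_neg]; ring
  rcases Nat.eq_zero_or_pos N with h0 | hpos
  · subst h0
    rw [hend, hkey]
    exact ⟨le_refl _, by simp⟩
  · have hb0 : β 0 < 1 := by
      rw [hrec 0 hpos]
      have := Real.exp_pos (-β 1)
      linarith
    have hlt : Real.exp (-1) < Real.exp (-β 0) := Real.exp_lt_exp.mpr (by linarith)
    rw [hkey]
    exact ⟨le_of_lt hlt, by constructor <;> intro h <;> [linarith; omega]⟩
end

section
/- Let N ≥ 0 and let b_0, ..., b_N > 0. Define P(b_0,...,b_N) = Σ_{l=0}^{N} b_l exp(-Σ_{j=0}^{l} b_j). If the b_j satisfy the stationarity conditions Σ_{l=m}^{N} b_l exp(-Σ_{j=m+1}^{l} b_j) = 1 for all 0 ≤ m ≤ N, then b_N = 1, b_m = 1 - exp(-b_{m+1}) for 0 ≤ m ≤ N-1, and P(b_0,...,b_N) = exp(-b_0). -/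
/-!
Peeling off the first interval factorises the exponential: for `m < N` the `m`-th stationarity
sum equals `b m + exp (-b (m + 1))` times the `(m + 1)`-st one, and the last one is `b N`.
Setting all of them to `1` gives the recursion for `b`, and the success probability is
`exp (-b 0)` times the `0`-th stationarity sum.
-/

open Finset Real

noncomputable section

/-- The left-hand side of the `m`-th stationarity condition `∂P/∂b_m = 0`. -/
def stationaritySum (b : ℕ → ℝ) (m N : ℕ) : ℝ :=
  ∑ l ∈ Icc m N, b l * exp (-∑ j ∈ Icc (m + 1) l, b j)

lemma exp_neg_sum_Icc_of_le (b : ℕ → ℝ) {a l : ℕ} (h : a ≤ l) :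
    exp (-∑ j ∈ Icc a l, b j) = exp (-b a) * exp (-∑ j ∈ Icc (a + 1) l, b j) := by
  rw [← add_sum_Ioc_eq_sum_Icc h, Icc_add_one_left_eq_Ioc, neg_add, exp_add]

lemma stationaritySum_self (b : ℕ → ℝ) (N : ℕ) : stationaritySum b N N = b N := by
  simp [stationaritySum]

lemma stationaritySum_of_lt (b : ℕ → ℝ) {m N : ℕ} (h : m < N) :
    stationaritySum b m N = b m + exp (-b (m + 1)) * stationaritySum b (m + 1) N := by
  rw [stationaritySum, ← add_sum_Ioc_eq_sum_Icc h.le, Icc_eq_empty_of_lt m.lt_succ_self,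
    sum_empty, neg_zero, exp_zero, mul_one, ← Icc_add_one_left_eq_Ioc, stationaritySum, mul_sum]
  congr 1
  refine sum_congr rfl fun l hl => ?_
  rw [exp_neg_sum_Icc_of_le b (mem_Icc.mp hl).1]
  ring

lemma sum_range_mul_exp_neg_sum_range (b : ℕ → ℝ) (N : ℕ) :
    ∑ l ∈ range (N + 1), b l * exp (-∑ j ∈ range (l + 1), b j) =
      exp (-b 0) * stationaritySum b 0 N := by
  rw [stationaritySum, mul_sum, Nat.range_succ_eq_Icc_zero]
  refine sum_congr rfl fun l _ => ?_
  rw [Nat.range_succ_eq_Icc_zero, exp_neg_sum_Icc_of_le b l.zero_le]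
  ring

end

theorem stmt8_general (N : ℕ) (b : ℕ → ℝ)
    (hstat : ∀ m ≤ N, ∑ l ∈ Finset.Icc m N,
        b l * Real.exp (-(∑ j ∈ Finset.Icc (m + 1) l, b j)) = 1) :
    b N = 1 ∧ (∀ m < N, b m = 1 - Real.exp (-b (m + 1))) ∧
      ∑ l ∈ Finset.range (N + 1),
          b l * Real.exp (-(∑ j ∈ Finset.range (l + 1), b j)) = Real.exp (-b 0) := by
  have hS : ∀ m ≤ N, stationaritySum b m N = 1 := hstat
  refine ⟨stationaritySum_self b N ▸ hS N le_rfl, fun m hm => ?_, ?_⟩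
  · have h := hS m hm.le
    rw [stationaritySum_of_lt b hm, hS (m + 1) hm, mul_one] at h
    linarith
  · rw [sum_range_mul_exp_neg_sum_range, hS 0 N.zero_le, mul_one]

theorem stmt8 (N : ℕ) (b : ℕ → ℝ) (hb : ∀ j, 0 < b j)
    (hstat : ∀ m ≤ N, ∑ l ∈ Finset.Icc m N,
        b l * Real.exp (-(∑ j ∈ Finset.Icc (m + 1) l, b j)) = 1) :
    b N = 1 ∧ (∀ m < N, b m = 1 - Real.exp (-b (m + 1))) ∧
      ∑ l ∈ Finset.range (N + 1),
          b l * Real.exp (-(∑ j ∈ Finset.range (l + 1), b j)) = Real.exp (-b 0) :=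
  stmt8_general N b hstat
end

section
/- Let μ_1, ..., μ_k be i.i.d. uniform on [0,1), k ≥ 1, and let 0 ≤ α_0, ..., α_N with Σ α_j ≤ 1. Let T = min_i f(μ_i) where f maps a metric in [1-Σ_{j=0}^{l}α_j, 1-Σ_{j=0}^{l-1}α_j) to lΔ for 0 ≤ l ≤ N and maps smaller metrics to a value exceeding NΔ. Then E[min(T, NΔ)] = Δ · Σ_{l=0}^{N-1} (1 - Σ_{j=0}^{l} α_j)^k. -/
/-!
Every value of `f` on `[0, 1)` lies on the grid `{0, Δ, …, NΔ} ∪ (NΔ, ∞)`, and for a grid value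
`t` one has `min t (NΔ) = ∑_{l<N} Δ·[lΔ < t]`. Applied to `T = min_i f(μ_i)`, this gives
`E[min(T, NΔ)] = Δ ∑_{l<N} P(T > lΔ)`. Finally `T > lΔ` iff every `μ_i` lies below
`1 - ∑_{j ≤ l} α_j`, which by independence has probability `(1 - ∑_{j ≤ l} α_j)^k`.
-/

open MeasureTheory Finset

theorem exists_mem_Ico_of_le_of_lt {β : Type*} [LinearOrder β] (u : ℕ → β) {x : β} :
    ∀ {n : ℕ}, u n ≤ x → x < u 0 → ∃ m < n, x ∈ Set.Ico (u (m + 1)) (u m)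
  | 0, hn, h0 => absurd (hn.trans_lt h0) (lt_irrefl _)
  | n + 1, hn, h0 => by
    by_cases hx : u n ≤ x
    · obtain ⟨m, hm, hmx⟩ := exists_mem_Ico_of_le_of_lt u hx h0
      exact ⟨m, by omega, hmx⟩
    · exact ⟨n, by omega, hn, not_le.1 hx⟩

theorem lt_ciInf_iff_of_finite {ι β : Type*} [Finite ι] [Nonempty ι]
    [ConditionallyCompleteLinearOrder β] {g : ι → β} {a : β} :
    a < ⨅ i, g i ↔ ∀ i, a < g i := by
  obtain ⟨i₀, hi₀⟩ := exists_eq_ciInf_of_finite (f := g)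
  exact ⟨fun h i => h.trans_le (ciInf_le (Set.finite_range g).bddBelow i),
    fun h => hi₀ ▸ h i₀⟩

theorem min_eq_sum_ite_lt {Δ t : ℝ} (hΔ : 0 < Δ) {N : ℕ}
    (ht : (∃ m ≤ N, t = m * Δ) ∨ N * Δ < t) :
    min t (N * Δ) = ∑ l ∈ range N, if l * Δ < t then Δ else 0 := by
  rcases ht with ⟨m, hmN, rfl⟩ | hNt
  · have hfilter : (range N).filter (fun l : ℕ => (l : ℝ) * Δ < m * Δ) = range m := by
      ext l
      simp only [mem_filter, mem_range, mul_lt_mul_iff_left₀ hΔ, Nat.cast_lt]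
      omega
    rw [min_eq_left (by gcongr), ← sum_filter, hfilter, sum_const, card_range, nsmul_eq_mul]
  · have hlt : ∀ l ∈ range N, (l : ℝ) * Δ < t := fun l hl =>
      lt_of_le_of_lt (by gcongr; exact (mem_range.1 hl).le) hNt
    rw [min_eq_right hNt.le, sum_congr rfl fun l hl => if_pos (hlt l hl), sum_const, card_range,
      nsmul_eq_mul]

section Levels

variable {N : ℕ} {Δ : ℝ} {α : ℕ → ℝ} {f : ℝ → ℝ}

theorem monotone_sum_range_of_nonneg (hα : ∀ j, 0 ≤ α j) :
    Monotone fun l => ∑ j ∈ range l, α j := fun _ _ hab =>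
  sum_le_sum_of_subset_of_nonneg (range_subset_range.2 hab) fun j _ _ => hα j

variable
    (hf1 : ∀ l ≤ N, ∀ x ∈ Set.Ico (1 - ∑ j ∈ Finset.range (l + 1), α j)
        (1 - ∑ j ∈ Finset.range l, α j), f x = l * Δ)
    (hf2 : ∀ x, x < 1 - ∑ j ∈ Finset.range (N + 1), α j → (N : ℝ) * Δ < f x)
include hf1 hf2

theorem apply_lt_one_cases {x : ℝ} (hx : x < 1) :
    (x < 1 - ∑ j ∈ range (N + 1), α j ∧ N * Δ < f x) ∨
      ∃ m ≤ N, x ∈ Set.Ico (1 - ∑ j ∈ range (m + 1), α j) (1 - ∑ j ∈ range m, α j) ∧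
        f x = m * Δ := by
  by_cases hxN : x < 1 - ∑ j ∈ range (N + 1), α j
  · exact Or.inl ⟨hxN, hf2 x hxN⟩
  · obtain ⟨m, hm, hmx⟩ := exists_mem_Ico_of_le_of_lt (fun l => 1 - ∑ j ∈ range l, α j)
      (not_lt.1 hxN) (by simpa using hx)
    exact Or.inr ⟨m, by omega, hmx, hf1 m (by omega) x hmx⟩

theorem apply_mem_grid {x : ℝ} (hx : x < 1) : (∃ m ≤ N, f x = m * Δ) ∨ N * Δ < f x := by
  rcases apply_lt_one_cases hf1 hf2 hx with ⟨-, h⟩ | ⟨m, hm, -, h⟩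
  exacts [Or.inr h, Or.inl ⟨m, hm, h⟩]

theorem lt_apply_iff (hΔ : 0 < Δ) (hα : ∀ j, 0 ≤ α j) {x : ℝ} (hx : x < 1) {l : ℕ} (hl : l ≤ N) :
    l * Δ < f x ↔ x < 1 - ∑ j ∈ range (l + 1), α j := by
  have hS := monotone_sum_range_of_nonneg hα
  rcases apply_lt_one_cases hf1 hf2 hx with ⟨hxN, hfx⟩ | ⟨m, hm, ⟨hmx, hxm⟩, hfx⟩
  · have : ∑ j ∈ range (l + 1), α j ≤ ∑ j ∈ range (N + 1), α j := hS (by omega)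
    exact iff_of_true ((mul_le_mul_of_nonneg_right (by exact_mod_cast hl) hΔ.le).trans_lt hfx)
      (by linarith)
  · rw [hfx, mul_lt_mul_iff_left₀ hΔ, Nat.cast_lt]
    constructor
    · intro hlm
      have : ∑ j ∈ range (l + 1), α j ≤ ∑ j ∈ range m, α j := hS hlm
      linarith
    · intro hxl
      by_contra! hml
      have : ∑ j ∈ range (m + 1), α j ≤ ∑ j ∈ range (l + 1), α j := hS (by omega)
      linarith

end Levels

theorem ae_forall_mem_pi_restrict {ι : Type*} [Fintype ι] {X : ι → Type*}
    [∀ i, MeasurableSpace (X i)] {μ : ∀ i, Measure (X i)} [∀ i, SigmaFinite (μ i)]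
    {s : ∀ i, Set (X i)} (hs : ∀ i, MeasurableSet (s i)) :
    ∀ᵐ ω ∂Measure.pi fun i => (μ i).restrict (s i), ∀ i, ω i ∈ s i :=
  ae_all_iff.2 fun i => Measure.tendsto_eval_ae_ae.eventually (ae_restrict_mem (hs i))

theorem measureReal_pi_Iio_restrict_Ico {ι : Type*} [Fintype ι] {c : ℝ} (hc0 : 0 ≤ c)
    (hc1 : c ≤ 1) :
    (Measure.pi fun _ : ι => volume.restrict (Set.Ico (0 : ℝ) 1)).real
      (Set.univ.pi fun _ => Set.Iio c) = c ^ Fintype.card ι := by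
  rw [measureReal_def, Measure.pi_pi,
    prod_congr rfl fun _ _ => Measure.restrict_apply measurableSet_Iio, Set.inter_comm,
    Set.Ico_inter_Iio, min_eq_right hc1, Real.volume_Ico, sub_zero, prod_const, card_univ,
    ENNReal.toReal_pow, ENNReal.toReal_ofReal hc0]

theorem stmt11 (k N : ℕ) (hk : 1 ≤ k) (Δ : ℝ) (hΔ : 0 < Δ) (α : ℕ → ℝ)
    (hαnn : ∀ j, 0 ≤ α j) (hsum : ∑ j ∈ Finset.range (N + 1), α j ≤ 1)
    (f : ℝ → ℝ)
    (hf1 : ∀ l ≤ N, ∀ x ∈ Set.Ico (1 - ∑ j ∈ Finset.range (l + 1), α j)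
        (1 - ∑ j ∈ Finset.range l, α j), f x = l * Δ)
    (hf2 : ∀ x, x < 1 - ∑ j ∈ Finset.range (N + 1), α j → (N : ℝ) * Δ < f x) :
    ∫ ω : Fin k → ℝ, min (⨅ i, f (ω i)) ((N : ℝ) * Δ)
        ∂(Measure.pi fun _ : Fin k => volume.restrict (Set.Ico (0 : ℝ) 1))
      = Δ * ∑ l ∈ Finset.range N, (1 - ∑ j ∈ Finset.range (l + 1), α j) ^ k := by
  have : Nonempty (Fin k) := ⟨⟨0, hk⟩⟩
  set c : ℕ → ℝ := fun l => 1 - ∑ j ∈ range (l + 1), α j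
  have hbox (l : ℕ) : MeasurableSet (Set.univ.pi fun _ : Fin k => Set.Iio (c l)) :=
    .univ_pi fun _ => measurableSet_Iio
  have hlayers : ∀ᵐ ω ∂(Measure.pi fun _ : Fin k => volume.restrict (Set.Ico (0 : ℝ) 1)),
      min (⨅ i, f (ω i)) ((N : ℝ) * Δ) =
        ∑ l ∈ range N, (Set.univ.pi fun _ => Set.Iio (c l)).indicator (fun _ => Δ) ω := by
    filter_upwards [ae_forall_mem_pi_restrict fun _ => measurableSet_Ico] with ω hω
    replace hω i : ω i < 1 := (hω i).2
    classical
    obtain ⟨i₀, hi₀⟩ := exists_eq_ciInf_of_finite (f := fun i => f (ω i))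
    rw [min_eq_sum_ite_lt hΔ (hi₀ ▸ apply_mem_grid hf1 hf2 (hω i₀))]
    refine sum_congr rfl fun l hl => ?_
    simp only [lt_ciInf_iff_of_finite, lt_apply_iff hf1 hf2 hΔ hαnn (hω _) (mem_range.1 hl).le,
      Set.indicator_apply, Set.mem_univ_pi, Set.mem_Iio, c]
  rw [integral_congr_ae hlayers,
    integral_finsetSum _ fun l _ => (integrable_const Δ).indicator (hbox l), mul_sum]
  refine sum_congr rfl fun l hl => ?_
  have hcl : 0 ≤ c l := by
    have := monotone_sum_range_of_nonneg hαnn (show l + 1 ≤ N + 1 by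
      have := mem_range.1 hl; omega)
    simp only [c]; linarith
  rw [integral_indicator_const _ (hbox l), measureReal_pi_Iio_restrict_Ico hcl
    (by simpa [c] using sum_nonneg fun j _ => hαnn j), Fintype.card_fin, smul_eq_mul, mul_comm]
end

section
/- Let b_0, ..., b_N > 0, Δ > 0, λ > 0, and define L(b_0,...,b_N) = Δ Σ_{l=0}^{N-1} exp(-Σ_{j=0}^{l} b_j) - λ Σ_{l=0}^{N} b_l exp(-Σ_{j=0}^{l} b_j). If all partial derivatives ∂L/∂b_m vanish, then b_N = 1 and b_m = 1 - exp(-b_{m+1}) + Δ/λ for 0 ≤ m ≤ N-1. -/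
/-!
Write `E l = exp (-(b 0 + ⋯ + b l))`. Since `∂E l/∂b m = -E l` for `m ≤ l` and `0` otherwise,
`∂L/∂b m = -Δ ∑_{m ≤ l < N} E l - λ E m + λ ∑_{m ≤ l ≤ N} b l E l`.
For `m = N` this is `λ E N (b N - 1)`, and for `m < N` the difference of the `m`-th and
`(m+1)`-st partial derivatives telescopes to `E m (λ b m - λ (1 - exp (-b (m+1))) - Δ)`;
as `E m > 0`, their vanishing gives the claimed recursion.
-/

open Finset

lemma Finset.sum_range_ite_le {M : Type*} [AddCommMonoid M] (m n : ℕ) (f : ℕ → M) :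
    (∑ l ∈ range n, if m ≤ l then f l else 0) = ∑ l ∈ Ico m n, f l := by
  rw [← sum_filter]
  congr 1
  ext l
  simp only [mem_filter, mem_range, mem_Ico]
  omega

section UpdateDeriv

variable {𝕜 ι : Type*} [NontriviallyNormedField 𝕜] [DecidableEq ι]

lemma hasDerivAt_update_apply (c : ι → 𝕜) (m l : ι) :
    HasDerivAt (fun x => Function.update c m x l) (if l = m then 1 else 0) (c m) := by
  simp only [Function.update_apply]
  split_ifs with h
  · subst h; exact hasDerivAt_id _
  · exact hasDerivAt_const _ _

lemma hasDerivAt_sum_update (c : ι → 𝕜) (m : ι) (s : Finset ι) :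
    HasDerivAt (fun x => ∑ j ∈ s, Function.update c m x j) (if m ∈ s then 1 else 0) (c m) := by
  simpa only [sum_ite_eq'] using
    HasDerivAt.fun_sum fun j (_ : j ∈ s) => hasDerivAt_update_apply c m j

end UpdateDeriv

namespace TimerScheme

noncomputable def survival (c : ℕ → ℝ) (l : ℕ) : ℝ :=
  Real.exp (-∑ j ∈ range (l + 1), c j)

noncomputable def objective (N : ℕ) (Δ lam : ℝ) (c : ℕ → ℝ) : ℝ :=
  Δ * ∑ l ∈ range N, survival c l - lam * ∑ l ∈ range (N + 1), c l * survival c l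

noncomputable def objectivePartial (N : ℕ) (Δ lam : ℝ) (c : ℕ → ℝ) (m : ℕ) : ℝ :=
  -Δ * ∑ l ∈ Ico m N, survival c l - lam * survival c m
    + lam * ∑ l ∈ Ico m (N + 1), c l * survival c l

lemma survival_pos (c : ℕ → ℝ) (l : ℕ) : 0 < survival c l := Real.exp_pos _

lemma survival_succ (c : ℕ → ℝ) (l : ℕ) :
    survival c (l + 1) = survival c l * Real.exp (-c (l + 1)) := by
  rw [survival, survival, sum_range_succ, ← Real.exp_add, neg_add]

lemma hasDerivAt_survival_update (c : ℕ → ℝ) (m l : ℕ) :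
    HasDerivAt (fun x => survival (Function.update c m x) l)
      (if m ≤ l then -survival c l else 0) (c m) := by
  refine (hasDerivAt_sum_update c m (range (l + 1))).fun_neg.exp.congr_deriv ?_
  simp only [survival, Function.update_eq_self, mem_range, Nat.lt_succ_iff]
  split_ifs <;> ring

lemma hasDerivAt_objective_update (N : ℕ) (Δ lam : ℝ) (c : ℕ → ℝ) {m : ℕ} (hm : m ≤ N) :
    HasDerivAt (fun x => objective N Δ lam (Function.update c m x))
      (objectivePartial N Δ lam c m) (c m) := by
  have hTime := HasDerivAt.fun_sum fun l (_ : l ∈ range N) => hasDerivAt_survival_update c m l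
  have hSuccess := HasDerivAt.fun_sum fun l (_ : l ∈ range (N + 1)) =>
    (hasDerivAt_update_apply c m l).mul (hasDerivAt_survival_update c m l)
  refine ((hTime.const_mul Δ).fun_sub (hSuccess.const_mul lam)).congr_deriv ?_
  simp only [Function.update_eq_self, ite_mul, one_mul, zero_mul, mul_ite, mul_zero,
    sum_add_distrib, sum_ite_eq', sum_range_ite_le, mem_range, Nat.lt_succ_of_le hm, if_true,
    mul_neg, sum_neg_distrib, objectivePartial]
  ring

lemma objectivePartial_self (N : ℕ) (Δ lam : ℝ) (c : ℕ → ℝ) :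
    objectivePartial N Δ lam c N = lam * survival c N * (c N - 1) := by
  simp only [objectivePartial, Ico_self, sum_empty, Nat.Ico_succ_singleton, sum_singleton]
  ring

lemma objectivePartial_sub_succ (N : ℕ) (Δ lam : ℝ) (c : ℕ → ℝ) {m : ℕ} (hm : m < N) :
    objectivePartial N Δ lam c m - objectivePartial N Δ lam c (m + 1)
      = survival c m * (lam * c m - lam * (1 - Real.exp (-c (m + 1))) - Δ) := by
  simp only [objectivePartial, sum_eq_sum_Ico_succ_bot hm,
    sum_eq_sum_Ico_succ_bot (Nat.lt_succ_of_lt hm), survival_succ]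
  ring

end TimerScheme

open TimerScheme in
theorem stmt17_general (N : ℕ) (Δ lam : ℝ) (hlam : 0 < lam)
    (b : ℕ → ℝ)
    (L : (ℕ → ℝ) → ℝ)
    (hL : ∀ c : ℕ → ℝ, L c = Δ * ∑ l ∈ Finset.range N,
          Real.exp (-(∑ j ∈ Finset.range (l + 1), c j))
        - lam * ∑ l ∈ Finset.range (N + 1),
          c l * Real.exp (-(∑ j ∈ Finset.range (l + 1), c j)))
    (hstat : ∀ m ≤ N, deriv (fun x : ℝ => L (Function.update b m x)) (b m) = 0) :
    b N = 1 ∧ ∀ m < N, b m = 1 - Real.exp (-b (m + 1)) + Δ / lam := by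
  obtain rfl : L = objective N Δ lam := funext hL
  have hcrit : ∀ m ≤ N, objectivePartial N Δ lam b m = 0 := fun m hm =>
    (hasDerivAt_objective_update N Δ lam b hm).deriv ▸ hstat m hm
  refine ⟨?_, fun m hm => ?_⟩
  · have h := objectivePartial_self N Δ lam b ▸ hcrit N le_rfl
    have := (mul_eq_zero.mp h).resolve_left (mul_pos hlam (survival_pos b N)).ne'
    linarith
  · have h := objectivePartial_sub_succ N Δ lam b hm
    rw [hcrit m hm.le, hcrit (m + 1) hm, sub_zero, eq_comm, mul_eq_zero] at h
    have hrec := h.resolve_left (survival_pos b m).ne'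
    field_simp
    linear_combination hrec

theorem stmt17 (N : ℕ) (Δ lam : ℝ) (hΔ : 0 < Δ) (hlam : 0 < lam)
    (b : ℕ → ℝ) (hb : ∀ j, 0 < b j)
    (L : (ℕ → ℝ) → ℝ)
    (hL : ∀ c : ℕ → ℝ, L c = Δ * ∑ l ∈ Finset.range N,
          Real.exp (-(∑ j ∈ Finset.range (l + 1), c j))
        - lam * ∑ l ∈ Finset.range (N + 1),
          c l * Real.exp (-(∑ j ∈ Finset.range (l + 1), c j)))
    (hstat : ∀ m ≤ N, deriv (fun x : ℝ => L (Function.update b m x)) (b m) = 0) :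
    b N = 1 ∧ ∀ m < N, b m = 1 - Real.exp (-b (m + 1)) + Δ / lam :=
  stmt17_general N Δ lam hlam b L hL hstat
end
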